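/- Let H be a complex Hilbert space, let A be a bounded self-adjoint operator on H, and let Θ be a bounded operator on H; for s ∈ ℝ write cos(sA) := (exp(isA) + exp(-isA))/2, where exp denotes the exponential in the Banach algebra of bounded operators on H. Let ψ : ℝ → ℂ be a Schwartz function, let c > 0, let φ : ℝ → ℂ be a bounded continuous function with support contained in [−2c, 2c], and for ε ∈ (0,1] define the bounded operator T_ε := ∫_ℝ φ(s) ε^{-1} ψ(s/ε) cos(sA) ds (Bochner integral). Then for all ε ∈ (0,1], ‖Θ ∘ T_ε − T_ε ∘ Θ‖ ≤ (1/2) · ‖A²Θ − ΘA²‖ · (sup_{s∈ℝ} |φ(s)|) · (∫_ℝ σ² |ψ(σ)| dσ) · ε². -/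

import Mathlib

/-!
Let `C s = cos (sA)` and `S t = ∫₀ᵗ C = sin (tA) / A`, so that `S' = C` and `C' = -S A²`.
Differentiating `r ↦ C (s - r) u r + S (s - r) u' r` with `u r = [Θ, C r]` gives the Duhamel
formula `[Θ, C s] = ∫₀ˢ S (s - r) [A², Θ] C r dr`. For self-adjoint `A` the operators `exp (±isA)`
are unitary, so `‖C‖ ≤ 1`, `‖S t‖ ≤ |t|` and `‖[Θ, C s]‖ ≤ ‖[A², Θ]‖ s² / 2`. Integrating against
`φ s ε⁻¹ ψ (s / ε)` and substituting `s = εσ` turns `ε⁻¹ ∫ s² |ψ (s / ε)| ds` into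
`ε² ∫ σ² |ψ σ|`.
-/

open MeasureTheory Filter Topology

/-- The operator cosine family `cos (s A) = (exp (i s A) + exp (-i s A)) / 2` of a bounded
operator `A` on a complex Hilbert space. -/
noncomputable def opCos {H : Type*} [NormedAddCommGroup H] [InnerProductSpace ℂ H]
    [CompleteSpace H] (A : H →L[ℂ] H) (s : ℝ) : H →L[ℂ] H :=
  (2 : ℂ)⁻¹ • (NormedSpace.exp (((s : ℂ) * Complex.I) • A) +
    NormedSpace.exp ((-(s : ℂ) * Complex.I) • A))

/-- The regularization operator `T_ε = ∫ φ(s) ε⁻¹ ψ(s/ε) cos (s A) ds` obtained by pairing the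
operator cosine family of `A` against the cutoff `φ` and the scaled profile `ε⁻¹ ψ(·/ε)`. -/
noncomputable def regOp {H : Type*} [NormedAddCommGroup H] [InnerProductSpace ℂ H]
    [CompleteSpace H] (A : H →L[ℂ] H) (φ : ℝ → ℂ) (ψ : ℝ → ℂ) (ε : ℝ) : H →L[ℂ] H :=
  ∫ s : ℝ, (φ s * (ε : ℂ)⁻¹ * ψ (s / ε)) • opCos A s

section CosineSinePair

variable {𝔸 : Type*} [NormedRing 𝔸] [NormedAlgebra ℝ 𝔸] [CompleteSpace 𝔸]

/-- For `K = A²` the model pair is `C t = cos (tA)`, `S t = sin (tA) / A`. -/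
structure IsCosineSinePair (K : 𝔸) (C S : ℝ → 𝔸) : Prop where
  hasDerivAt_sine : ∀ t, HasDerivAt S (C t) t
  hasDerivAt_cosine : ∀ t, HasDerivAt C (-(S t * K)) t
  cosine_zero : C 0 = 1
  sine_zero : S 0 = 0

namespace IsCosineSinePair

variable {K : 𝔸} {C S : ℝ → 𝔸}

theorem commutator_eq_integral (h : IsCosineSinePair K C S) (hKC : ∀ t, Commute K (C t))
    (Θ : 𝔸) (s : ℝ) :
    Θ * C s - C s * Θ = ∫ r in 0..s, S (s - r) * ((K * Θ - Θ * K) * C r) := by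
  set u : ℝ → 𝔸 := fun r => Θ * C r - C r * Θ
  set v : ℝ → 𝔸 := fun r => S r * K * Θ - Θ * (S r * K)
  have hu (r : ℝ) : HasDerivAt u (v r) r := by
    refine (((h.hasDerivAt_cosine r).const_mul Θ).sub
      ((h.hasDerivAt_cosine r).mul_const Θ)).congr_deriv ?_
    simp only [v]
    noncomm_ring
  have hv (r : ℝ) : HasDerivAt v (C r * K * Θ - Θ * (C r * K)) r :=
    ((((h.hasDerivAt_sine r).mul_const K).mul_const Θ).sub
      (((h.hasDerivAt_sine r).mul_const K).const_mul Θ))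
  have hG (r : ℝ) : HasDerivAt (fun r => C (s - r) * u r + S (s - r) * v r)
      (S (s - r) * ((K * Θ - Θ * K) * C r)) r := by
    refine ((((h.hasDerivAt_cosine (s - r)).comp_const_sub s r).mul (hu r)).add
      (((h.hasDerivAt_sine (s - r)).comp_const_sub s r).mul (hv r))).congr_deriv ?_
    simp only [u]
    rw [← (hKC r).eq]
    noncomm_ring
  have hcont : Continuous fun r => S (s - r) * ((K * Θ - Θ * K) * C r) := by
    have hS : Continuous S :=
      continuous_iff_continuousAt.2 fun t => (h.hasDerivAt_sine t).continuousAt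
    have hC : Continuous C :=
      continuous_iff_continuousAt.2 fun t => (h.hasDerivAt_cosine t).continuousAt
    fun_prop
  rw [intervalIntegral.integral_eq_sub_of_hasDerivAt (fun r _ => hG r)
    (hcont.intervalIntegrable _ _)]
  simp [u, v, h.cosine_zero, h.sine_zero]

theorem norm_commutator_le (h : IsCosineSinePair K C S) (hKC : ∀ t, Commute K (C t))
    (hC : ∀ t, ‖C t‖ ≤ 1) (hS : ∀ t, ‖S t‖ ≤ |t|) (Θ : 𝔸) {s : ℝ} (hs : 0 ≤ s) :
    ‖Θ * C s - C s * Θ‖ ≤ ‖K * Θ - Θ * K‖ * (s ^ 2 / 2) := by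
  rw [h.commutator_eq_integral hKC]
  calc ‖∫ r in 0..s, S (s - r) * ((K * Θ - Θ * K) * C r)‖
      ≤ ∫ r in 0..s, (s - r) * ‖K * Θ - Θ * K‖ := by
        refine intervalIntegral.norm_integral_le_of_norm_le hs (ae_of_all _ fun r hr => ?_)
          (Continuous.intervalIntegrable (by fun_prop) _ _)
        calc ‖S (s - r) * ((K * Θ - Θ * K) * C r)‖
            ≤ ‖S (s - r)‖ * (‖K * Θ - Θ * K‖ * ‖C r‖) :=
              (norm_mul_le _ _).trans (by gcongr; exact norm_mul_le _ _)
          _ ≤ |s - r| * (‖K * Θ - Θ * K‖ * 1) := by gcongr <;> simp [hS, hC]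
          _ = (s - r) * ‖K * Θ - Θ * K‖ := by rw [abs_of_nonneg (by linarith [hr.2]), mul_one]
    _ = ‖K * Θ - Θ * K‖ * (s ^ 2 / 2) := by
        rw [intervalIntegral.integral_mul_const,
          intervalIntegral.integral_comp_sub_left (fun x => x)]
        simp only [sub_self, sub_zero, integral_id]
        ring

end IsCosineSinePair

end CosineSinePair

theorem IsSelfAdjoint.norm_exp_smul_le_one {𝔸 : Type*} [NormedRing 𝔸] [NormedAlgebra ℂ 𝔸]
    [StarRing 𝔸] [CStarRing 𝔸] [StarModule ℂ 𝔸] [CompleteSpace 𝔸] {a : 𝔸} (ha : IsSelfAdjoint a)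
    {z : ℂ} (hz : star z = -z) : ‖NormedSpace.exp (z • a)‖ ≤ 1 := by
  let _ : NormedAlgebra ℚ 𝔸 := .restrictScalars ℚ ℂ 𝔸
  nontriviality 𝔸
  exact (CStarRing.norm_of_mem_unitary
    (NormedSpace.exp_mem_unitary_of_mem_skewAdjoint (ha.smul_mem_skewAdjoint hz))).le

section OpCos

open NormedSpace Complex

variable {H : Type*} [NormedAddCommGroup H] [InnerProductSpace ℂ H] [CompleteSpace H]
  (A : H →L[ℂ] H)

theorem opCos_eq_exp (s : ℝ) :
    opCos A s = (2 : ℂ)⁻¹ • (exp (s • (I • A)) + exp (s • -(I • A))) := by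
  simp only [opCos, ← coe_smul, smul_neg, smul_smul, neg_mul, neg_smul]

theorem opCos_neg (s : ℝ) : opCos A (-s) = opCos A s := by
  rw [opCos_eq_exp, opCos_eq_exp, neg_smul_neg, add_comm, neg_smul, ← smul_neg]

theorem norm_opCos_le_one {A : H →L[ℂ] H} (hA : IsSelfAdjoint A) (s : ℝ) : ‖opCos A s‖ ≤ 1 := by
  have hexp (s : ℝ) : ‖exp (((s : ℂ) * I) • A)‖ ≤ 1 :=
    hA.norm_exp_smul_le_one (by simp [conj_ofReal])
  calc ‖opCos A s‖ ≤ ‖(2 : ℂ)⁻¹‖ * (‖exp (((s : ℂ) * I) • A)‖ + ‖exp ((-(s : ℂ) * I) • A)‖) :=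
        (norm_smul_le _ _).trans (by gcongr; exact norm_add_le _ _)
    _ ≤ 2⁻¹ * (1 + 1) := by
        gcongr
        · simp
        · exact hexp s
        · simpa using hexp (-s)
    _ = 1 := by norm_num

theorem commute_sq_opCos (s : ℝ) : Commute (A ^ 2) (opCos A s) := by
  rw [opCos_eq_exp]
  have hB : Commute (A ^ 2) (I • A) := ((Commute.refl A).pow_left 2).smul_right I
  exact ((hB.smul_right s).exp_right.add_right (hB.neg_right.smul_right s).exp_right).smul_right _

theorem hasDerivAt_opCos_exp (t : ℝ) :
    HasDerivAt (opCos A)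
      ((2 : ℂ)⁻¹ • (exp (t • (I • A)) * (I • A) + exp (t • -(I • A)) * -(I • A))) t := by
  rw [funext (opCos_eq_exp A)]
  exact ((hasDerivAt_exp_smul_const (I • A) t).add
    (hasDerivAt_exp_smul_const (-(I • A)) t)).const_smul (2 : ℂ)⁻¹

theorem continuous_opCos : Continuous (opCos A) :=
  continuous_iff_continuousAt.2 fun t => (hasDerivAt_opCos_exp A t).continuousAt

/-- `sin (tA) / A`. -/
noncomputable def opSin (t : ℝ) : H →L[ℂ] H := ∫ r in 0..t, opCos A r

theorem hasDerivAt_opSin (t : ℝ) : HasDerivAt (opSin A) (opCos A t) t :=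
  intervalIntegral.integral_hasDerivAt_right ((continuous_opCos A).intervalIntegrable _ _)
    ((continuous_opCos A).stronglyMeasurableAtFilter _ _) (continuous_opCos A).continuousAt

theorem norm_opSin_le {A : H →L[ℂ] H} (hA : IsSelfAdjoint A) (t : ℝ) : ‖opSin A t‖ ≤ |t| := by
  simpa [opSin] using intervalIntegral.norm_integral_le_of_norm_le_const (a := 0) (b := t)
    fun r _ => norm_opCos_le_one hA r

theorem hasDerivAt_opCos (t : ℝ) : HasDerivAt (opCos A) (-(opSin A t * A ^ 2)) t := by
  convert hasDerivAt_opCos_exp A t using 1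
  have hB : (I • A) * (I • A) = -A ^ 2 := by
    rw [smul_mul_smul_comm, I_mul_I, neg_one_smul, sq]
  have hderiv (r : ℝ) : HasDerivAt
      (fun r : ℝ => (2 : ℂ)⁻¹ • (exp (r • (I • A)) * (I • A) + exp (r • -(I • A)) * -(I • A)))
      (-(opCos A r * A ^ 2)) r := by
    refine ((((hasDerivAt_exp_smul_const (I • A) r).mul_const (I • A)).add
      ((hasDerivAt_exp_smul_const (-(I • A)) r).mul_const (-(I • A)))).const_smul
      (2 : ℂ)⁻¹).congr_deriv ?_
    rw [opCos_eq_exp, mul_assoc, mul_assoc, neg_mul_neg, hB, ← add_mul, smul_mul_assoc, mul_neg,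
      smul_neg]
  have hFTC := intervalIntegral.integral_eq_sub_of_hasDerivAt (fun r _ => hderiv r)
    (((continuous_opCos A).mul continuous_const).neg.intervalIntegrable 0 t)
  have hmul : ∫ r in 0..t, opCos A r * A ^ 2 = opSin A t * A ^ 2 :=
    ((ContinuousLinearMap.mul ℝ (H →L[ℂ] H)).flip (A ^ 2)).intervalIntegral_comp_comm
      ((continuous_opCos A).intervalIntegrable 0 t)
  rw [intervalIntegral.integral_neg, hmul] at hFTC
  simp [hFTC]

theorem opCos_zero : opCos A 0 = 1 := by
  rw [opCos_eq_exp, zero_smul, zero_smul, NormedSpace.exp_zero, ← two_smul ℂ, smul_smul,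
    inv_mul_cancel₀ two_ne_zero, one_smul]

theorem isCosineSinePair_opCos : IsCosineSinePair (A ^ 2) (opCos A) (opSin A) :=
  ⟨hasDerivAt_opSin A, hasDerivAt_opCos A, opCos_zero A, intervalIntegral.integral_same⟩

theorem norm_commutator_opCos_le {A : H →L[ℂ] H} (hA : IsSelfAdjoint A) (Θ : H →L[ℂ] H) (s : ℝ) :
    ‖Θ * opCos A s - opCos A s * Θ‖ ≤ ‖A ^ 2 * Θ - Θ * A ^ 2‖ * (s ^ 2 / 2) := by
  have hbound {s : ℝ} (hs : 0 ≤ s) := (isCosineSinePair_opCos A).norm_commutator_le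
    (commute_sq_opCos A) (norm_opCos_le_one hA) (norm_opSin_le hA) Θ hs
  rcases le_total 0 s with hs | hs
  · exact hbound hs
  · simpa only [opCos_neg, neg_sq] using hbound (neg_nonneg.2 hs)

end OpCos

theorem norm_commutator_integral_le {α 𝔸 : Type*} [MeasurableSpace α] {μ : Measure α}
    [NormedRing 𝔸] [NormedAlgebra ℝ 𝔸] (Θ : 𝔸) {F : α → 𝔸} {g : α → ℝ} (hg : Integrable g μ)
    (hFg : ∀ x, ‖Θ * F x - F x * Θ‖ ≤ g x) :
    ‖Θ * ∫ x, F x ∂μ - (∫ x, F x ∂μ) * Θ‖ ≤ ∫ x, g x ∂μ := by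
  by_cases hF : Integrable F μ
  · rw [← integral_const_mul_of_integrable hF, ← integral_mul_const_of_integrable hF,
      ← integral_sub (hF.const_mul Θ) (hF.mul_const Θ)]
    exact norm_integral_le_of_norm_le hg (ae_of_all _ hFg)
  · rw [integral_undef hF, mul_zero, zero_mul, sub_zero, norm_zero]
    exact integral_nonneg fun x => (norm_nonneg _).trans (hFg x)

theorem integral_sq_mul_comp_div (g : ℝ → ℝ) {ε : ℝ} (hε : ε ≠ 0) :
    ∫ s, s ^ 2 * g (s / ε) = |ε| ^ 3 * ∫ σ, σ ^ 2 * g σ := by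
  have h := Measure.integral_comp_div (fun σ => (ε * σ) ^ 2 * g σ) ε
  simp only [mul_div_cancel₀ _ hε, mul_pow, mul_assoc, integral_const_mul, smul_eq_mul] at h
  rw [h, ← sq_abs ε]
  ring

theorem MeasureTheory.Integrable.sq_mul_comp_div {g : ℝ → ℝ}
    (hg : Integrable fun σ => σ ^ 2 * g σ) {ε : ℝ} (hε : ε ≠ 0) :
    Integrable fun s => s ^ 2 * g (s / ε) := by
  convert (hg.const_mul (ε ^ 2)).comp_div hε using 2 with s
  field_simp

theorem stmt7_general {H : Type*} [NormedAddCommGroup H] [InnerProductSpace ℂ H] [CompleteSpace H]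
    (A : H →L[ℂ] H) (hA : IsSelfAdjoint A) (Θ : H →L[ℂ] H)
    (ψ : SchwartzMap ℝ ℂ) (φ : ℝ → ℂ)
    (hφbdd : BddAbove (Set.range fun s : ℝ => ‖φ s‖)) :
    ∀ ε ∈ Set.Ioc (0 : ℝ) 1,
      ‖Θ * regOp A φ (⇑ψ) ε - regOp A φ (⇑ψ) ε * Θ‖ ≤
        (1 / 2) * ‖A ^ 2 * Θ - Θ * A ^ 2‖ * (⨆ s : ℝ, ‖φ s‖) *
          (∫ σ : ℝ, σ ^ 2 * ‖ψ σ‖) * ε ^ 2 := by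
  rintro ε ⟨hε, -⟩
  unfold regOp
  set D := A ^ 2 * Θ - Θ * A ^ 2
  set M := ⨆ s : ℝ, ‖φ s‖
  have hψ : Integrable fun σ : ℝ => σ ^ 2 * ‖ψ σ‖ := by
    simpa using ψ.integrable_pow_mul volume 2
  have hcoef (s : ℝ) : ‖φ s * (ε : ℂ)⁻¹ * ψ (s / ε)‖ ≤ M * ε⁻¹ * ‖ψ (s / ε)‖ := by
    rw [norm_mul, norm_mul, norm_inv, Complex.norm_real, Real.norm_of_nonneg hε.le]
    gcongr
    exact le_ciSup hφbdd s
  have hpoint (s : ℝ) :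
      ‖Θ * ((φ s * (ε : ℂ)⁻¹ * ψ (s / ε)) • opCos A s)
        - ((φ s * (ε : ℂ)⁻¹ * ψ (s / ε)) • opCos A s) * Θ‖
        ≤ M * ε⁻¹ * ‖D‖ / 2 * (s ^ 2 * ‖ψ (s / ε)‖) := by
    rw [mul_smul_comm, smul_mul_assoc, ← smul_sub, norm_smul]
    calc _ ≤ (M * ε⁻¹ * ‖ψ (s / ε)‖) * (‖D‖ * (s ^ 2 / 2)) :=
          mul_le_mul (hcoef s) (norm_commutator_opCos_le hA Θ s) (norm_nonneg _)
            ((norm_nonneg _).trans (hcoef s))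
      _ = _ := by ring
  calc _ ≤ ∫ s, M * ε⁻¹ * ‖D‖ / 2 * (s ^ 2 * ‖ψ (s / ε)‖) :=
        norm_commutator_integral_le Θ ((hψ.sq_mul_comp_div hε.ne').const_mul _) hpoint
    _ = _ := by
        rw [integral_const_mul, integral_sq_mul_comp_div (fun σ => ‖ψ σ‖) hε.ne', abs_of_pos hε]
        field_simp

/-- With `T_ε` built from the cosine family of a bounded self-adjoint operator
`A`, a Schwartz profile `ψ` and a bounded continuous cutoff `φ` supported in `[-2c, 2c]`, the
commutator with a bounded operator `Θ` satisfies
`‖Θ ∘ T_ε - T_ε ∘ Θ‖ ≤ (1/2) ‖A²Θ - ΘA²‖ (sup |φ|) (∫ σ² |ψ(σ)| dσ) ε²` for `ε ∈ (0,1]`. -/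
theorem stmt7 {H : Type*} [NormedAddCommGroup H] [InnerProductSpace ℂ H] [CompleteSpace H]
    (A : H →L[ℂ] H) (hA : IsSelfAdjoint A) (Θ : H →L[ℂ] H)
    (ψ : SchwartzMap ℝ ℂ) (c : ℝ) (hc : 0 < c) (φ : ℝ → ℂ)
    (hφcont : Continuous φ) (hφbdd : BddAbove (Set.range fun s : ℝ => ‖φ s‖))
    (hφsupp : Function.support φ ⊆ Set.Icc (-(2 * c)) (2 * c)) :
    ∀ ε ∈ Set.Ioc (0 : ℝ) 1,
      ‖Θ * regOp A φ (⇑ψ) ε - regOp A φ (⇑ψ) ε * Θ‖ ≤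
        (1 / 2) * ‖A ^ 2 * Θ - Θ * A ^ 2‖ * (⨆ s : ℝ, ‖φ s‖) *
          (∫ σ : ℝ, σ ^ 2 * ‖ψ σ‖) * ε ^ 2 :=
  stmt7_general A hA Θ ψ φ hφbdd
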